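/- For any interval I ⊆ ℕ_0, the map P_I : Ĵ(Φ) → Ĵ(Φ) defined by P_I((x_n)) = (x_n·χ_I(n)) is a well-defined bounded linear projection with ‖P_I‖ ≤ 1. -/

import Mathlib

open Filter Topology

/-- Composition `φ_n^m = φ_{m-1} ∘ ⋯ ∘ φ_n : X n →L X m` (junk value for `m < n`). -/
noncomputable def phiTo {X : ℕ → Type*} [∀ n, NormedAddCommGroup (X n)]
    [∀ n, NormedSpace ℝ (X n)] (φ : ∀ n, X n →L[ℝ] X (n + 1)) (n : ℕ) :
    (m : ℕ) → X n →L[ℝ] X m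
  | 0 => 0
  | m + 1 =>
    if h : m + 1 = n then by rw [h]; exact ContinuousLinearMap.id ℝ (X n)
    else (φ m).comp (phiTo φ n m)

open Classical in
/-- `σ(x,S)²`: the sum over consecutive pairs `p < q` of `S` of `‖φ_p^q(x_p) - x_q‖²`. -/
noncomputable def sigma2 {X : ℕ → Type*} [∀ n, NormedAddCommGroup (X n)]
    [∀ n, NormedSpace ℝ (X n)] (φ : ∀ n, X n →L[ℝ] X (n + 1))
    (x : ∀ n, X n) (S : Finset ℕ) : ℝ :=
  ∑ p ∈ S, ∑ q ∈ S,
    if p < q ∧ ∀ r ∈ S, ¬(p < r ∧ r < q) then ‖phiTo φ p q (x p) - x q‖ ^ 2 else 0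

noncomputable def sigmaJ {X : ℕ → Type*} [∀ n, NormedAddCommGroup (X n)]
    [∀ n, NormedSpace ℝ (X n)] (φ : ∀ n, X n →L[ℝ] X (n + 1))
    (x : ∀ n, X n) (S : Finset ℕ) : ℝ :=
  Real.sqrt (sigma2 φ x S)

/-- `ρ(x,S)² = σ(x,S)² + ‖x_{max S}‖²`. -/
noncomputable def rho2 {X : ℕ → Type*} [∀ n, NormedAddCommGroup (X n)]
    [∀ n, NormedSpace ℝ (X n)] (φ : ∀ n, X n →L[ℝ] X (n + 1))
    (x : ∀ n, X n) (S : Finset ℕ) (hS : S.Nonempty) : ℝ :=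
  sigma2 φ x S + ‖x (S.max' hS)‖ ^ 2

noncomputable def rhoJ {X : ℕ → Type*} [∀ n, NormedAddCommGroup (X n)]
    [∀ n, NormedSpace ℝ (X n)] (φ : ∀ n, X n →L[ℝ] X (n + 1))
    (x : ∀ n, X n) (S : Finset ℕ) (hS : S.Nonempty) : ℝ :=
  Real.sqrt (rho2 φ x S hS)

/-- The set of values `ρ(x,S)` over finite nonempty `S ⊆ ℕ`. -/
def rhoSet {X : ℕ → Type*} [∀ n, NormedAddCommGroup (X n)]
    [∀ n, NormedSpace ℝ (X n)] (φ : ∀ n, X n →L[ℝ] X (n + 1))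
    (x : ∀ n, X n) : Set ℝ :=
  {r : ℝ | ∃ (S : Finset ℕ) (hS : S.Nonempty), r = rhoJ φ x S hS}

/-- Membership in `Ĵ(Φ)`: `sup_S ρ(x,S) < ∞`. -/
def memJhat {X : ℕ → Type*} [∀ n, NormedAddCommGroup (X n)]
    [∀ n, NormedSpace ℝ (X n)] (φ : ∀ n, X n →L[ℝ] X (n + 1))
    (x : ∀ n, X n) : Prop :=
  BddAbove (rhoSet φ x)

/-- The norm `‖x‖_J = (1/√2) sup_S ρ(x,S)`. -/
noncomputable def normJ {X : ℕ → Type*} [∀ n, NormedAddCommGroup (X n)]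
    [∀ n, NormedSpace ℝ (X n)] (φ : ∀ n, X n →L[ℝ] X (n + 1))
    (x : ∀ n, X n) : ℝ :=
  (Real.sqrt 2)⁻¹ * sSup (rhoSet φ x)

/-- Membership in `J(Φ)`: member of `Ĵ(Φ)` with `‖x_n‖ → 0`. -/
def memJ {X : ℕ → Type*} [∀ n, NormedAddCommGroup (X n)]
    [∀ n, NormedSpace ℝ (X n)] (φ : ∀ n, X n →L[ℝ] X (n + 1))
    (x : ∀ n, X n) : Prop :=
  memJhat φ x ∧ Tendsto (fun n => ‖x n‖) atTop (𝓝 0)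

open Classical in
/-- The coordinate restriction `P_I`. -/
noncomputable def restrictSeq {X : ℕ → Type*} [∀ n, NormedAddCommGroup (X n)]
    (I : Set ℕ) (x : ∀ n, X n) : ∀ n, X n :=
  fun n => if n ∈ I then x n else 0

/-- The stepping map `Q_α`. -/
noncomputable def stepSeq {X : ℕ → Type*} [∀ n, NormedAddCommGroup (X n)]
    [∀ n, NormedSpace ℝ (X n)] (φ : ∀ n, X n →L[ℝ] X (n + 1))
    (α : ℕ → ℕ) (x : ∀ n, X n) : ∀ n, X n :=
  fun n => phiTo φ (α n) n (x (α n))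

/-! Fix a finite `S` and put `T = S ∩ I`. Since `I` is an interval, consecutive points of `S` lying
in `I` are consecutive in `T`, at most one consecutive pair of `S` enters `I` (and it ends at
`min T`), and at most one leaves `I` (and it starts at `max T`). Hence `ρ(P_I x, S) ≤ ρ(x, {0} ∪ T)`:
the entering jump `‖x_{min T}‖` is the new step from `0` (recall `x_0 = 0`), and the leaving jump
`‖φ(x_{max T})‖ ≤ ‖x_{max T}‖` is paid for by the final term of `ρ(x, {0} ∪ T)`. -/

def consecPairs (S : Finset ℕ) : Finset (ℕ × ℕ) :=
  (S ×ˢ S).filter fun pq => pq.1 < pq.2 ∧ ∀ r ∈ S, ¬(pq.1 < r ∧ r < pq.2)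

section consecPairs

variable {S : Finset ℕ} {p q : ℕ}

theorem mem_consecPairs :
    (p, q) ∈ consecPairs S ↔ p ∈ S ∧ q ∈ S ∧ p < q ∧ ∀ r ∈ S, ¬(p < r ∧ r < q) := by
  simp [consecPairs, and_assoc]

theorem consecPairs_injOn_fst : Set.InjOn Prod.fst (consecPairs S : Set (ℕ × ℕ)) := by
  rintro ⟨p, q⟩ hpq ⟨p', q'⟩ hpq' (rfl : p = p')
  rw [Finset.mem_coe, mem_consecPairs] at hpq hpq'
  obtain h | rfl | h := lt_trichotomy q q'
  · exact absurd ⟨hpq.2.2.1, h⟩ (hpq'.2.2.2 q hpq.2.1)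
  · rfl
  · exact absurd ⟨hpq'.2.2.1, h⟩ (hpq.2.2.2 q' hpq'.2.1)

theorem consecPairs_injOn_snd : Set.InjOn Prod.snd (consecPairs S : Set (ℕ × ℕ)) := by
  rintro ⟨p, q⟩ hpq ⟨p', q'⟩ hpq' (rfl : q = q')
  rw [Finset.mem_coe, mem_consecPairs] at hpq hpq'
  obtain h | rfl | h := lt_trichotomy p p'
  · exact absurd ⟨h, hpq'.2.2.1⟩ (hpq.2.2.2 p' hpq'.1)
  · rfl
  · exact absurd ⟨h, hpq.2.2.1⟩ (hpq'.2.2.2 p hpq.1)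

theorem consecPairs_insert_of_lt_min' {a : ℕ} (hS : S.Nonempty) (ha : a < S.min' hS) :
    consecPairs (insert a S) = insert (a, S.min' hS) (consecPairs S) := by
  ext ⟨p, q⟩
  simp only [Finset.mem_insert, mem_consecPairs, Prod.mk.injEq, forall_eq_or_imp]
  constructor
  · rintro ⟨rfl | hp, rfl | hq, hpq, -, hgap⟩
    · exact absurd hpq (lt_irrefl _)
    · refine .inl ⟨rfl, le_antisymm ?_ (S.min'_le q hq)⟩
      by_contra! hlt
      exact hgap _ (S.min'_mem hS) ⟨ha, hlt⟩
    · exact absurd (hpq.trans ha) (S.min'_le p hp).not_gt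
    · exact .inr ⟨hp, hq, hpq, hgap⟩
  · rintro (⟨rfl, rfl⟩ | ⟨hp, hq, hpq, hgap⟩)
    · exact ⟨.inl rfl, .inr (S.min'_mem hS), ha, fun h => lt_irrefl _ h.1,
        fun r hr h => h.2.not_ge (S.min'_le r hr)⟩
    · exact ⟨.inr hp, .inr hq, hpq, fun h => (h.1.trans ha).not_ge (S.min'_le p hp), hgap⟩

variable {I : Set ℕ} [DecidablePred (· ∈ I)]

theorem filter_consecPairs_of_ordConnected (hI : I.OrdConnected) :
    (consecPairs S).filter (fun pq => pq.1 ∈ I ∧ pq.2 ∈ I) = consecPairs (S.filter (· ∈ I)) := by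
  ext ⟨p, q⟩
  simp only [Finset.mem_filter, mem_consecPairs]
  constructor
  · rintro ⟨⟨hp, hq, hpq, hgap⟩, hpI, hqI⟩
    exact ⟨⟨hp, hpI⟩, ⟨hq, hqI⟩, hpq, fun r hr => hgap r hr.1⟩
  · rintro ⟨⟨hp, hpI⟩, ⟨hq, hqI⟩, hpq, hgap⟩
    exact ⟨⟨hp, hq, hpq, fun r hr hpqr =>
      hgap r ⟨hr, hI.out hpI hqI ⟨hpqr.1.le, hpqr.2.le⟩⟩ hpqr⟩, hpI, hqI⟩

theorem snd_eq_min'_of_mem_consecPairs (hI : I.OrdConnected) (hpq : (p, q) ∈ consecPairs S)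
    (hp : p ∉ I) (hq : q ∈ I) :
    q = (S.filter (· ∈ I)).min' ⟨q, Finset.mem_filter.2 ⟨(mem_consecPairs.1 hpq).2.1, hq⟩⟩ := by
  obtain ⟨-, hqS, hpq, hgap⟩ := mem_consecPairs.1 hpq
  refine ((Finset.min'_eq_iff _ _ _).2 ⟨Finset.mem_filter.2 ⟨hqS, hq⟩, fun r hr => ?_⟩).symm
  rw [Finset.mem_filter] at hr
  by_contra! hrq
  rcases le_or_gt r p with hrp | hpr
  · exact hp (hI.out hr.2 hq ⟨hrp, hpq.le⟩)
  · exact hgap r hr.1 ⟨hpr, hrq⟩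

theorem fst_eq_max'_of_mem_consecPairs (hI : I.OrdConnected) (hpq : (p, q) ∈ consecPairs S)
    (hp : p ∈ I) (hq : q ∉ I) :
    p = (S.filter (· ∈ I)).max' ⟨p, Finset.mem_filter.2 ⟨(mem_consecPairs.1 hpq).1, hp⟩⟩ := by
  obtain ⟨hpS, -, hpq, hgap⟩ := mem_consecPairs.1 hpq
  refine ((Finset.max'_eq_iff _ _ _).2 ⟨Finset.mem_filter.2 ⟨hpS, hp⟩, fun r hr => ?_⟩).symm
  rw [Finset.mem_filter] at hr
  by_contra! hpr
  rcases le_or_gt q r with hqr | hrq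
  · exact hq (hI.out hp hr.2 ⟨hpq.le, hqr⟩)
  · exact hgap r hr.1 ⟨hpr, hrq⟩

end consecPairs

section sigma2

variable {X : ℕ → Type*} [∀ n, NormedAddCommGroup (X n)] [∀ n, NormedSpace ℝ (X n)]
  (φ : ∀ n, X n →L[ℝ] X (n + 1))

theorem norm_phiTo_apply_le (hφ : ∀ n, ‖φ n‖ ≤ 1) (p q : ℕ) (z : X p) :
    ‖phiTo φ p q z‖ ≤ ‖z‖ := by
  induction q with
  | zero => simp [phiTo]
  | succ m ih =>
    by_cases h : m + 1 = p
    · subst h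
      simp [phiTo]
    · rw [phiTo, dif_neg h]
      calc ‖φ m (phiTo φ p m z)‖ ≤ 1 * ‖phiTo φ p m z‖ := (φ m).le_of_opNorm_le (hφ m) _
        _ ≤ ‖z‖ := by rw [one_mul]; exact ih

theorem sigma2_eq_sum_consecPairs (x : ∀ n, X n) (S : Finset ℕ) :
    sigma2 φ x S = ∑ pq ∈ consecPairs S, ‖phiTo φ pq.1 pq.2 (x pq.1) - x pq.2‖ ^ 2 := by
  rw [sigma2, consecPairs, Finset.sum_filter, Finset.sum_product]

theorem sigma2_insert_of_lt_min' (x : ∀ n, X n) {S : Finset ℕ} (hS : S.Nonempty) {a : ℕ}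
    (ha : a < S.min' hS) :
    sigma2 φ x (insert a S) =
      sigma2 φ x S + ‖phiTo φ a (S.min' hS) (x a) - x (S.min' hS)‖ ^ 2 := by
  have hnot : (a, S.min' hS) ∉ consecPairs S := fun h =>
    (S.min'_le a (mem_consecPairs.1 h).1).not_gt ha
  rw [sigma2_eq_sum_consecPairs, consecPairs_insert_of_lt_min' hS ha, Finset.sum_insert hnot,
    sigma2_eq_sum_consecPairs, add_comm]

end sigma2

theorem sum_comp_le_of_injOn_of_eq {ι κ : Type*} {s : Finset ι} {f : ι → κ} {g : κ → ℝ} {c : κ}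
    (hf : Set.InjOn f s) (hc : ∀ i ∈ s, f i = c) (hg : 0 ≤ g c) : ∑ i ∈ s, g (f i) ≤ g c := by
  have hs : s.card ≤ 1 :=
    Finset.card_le_one.2 fun i hi j hj => hf hi hj ((hc i hi).trans (hc j hj).symm)
  calc ∑ i ∈ s, g (f i) = s.card * g c := by
        rw [Finset.sum_congr rfl fun i hi => congrArg g (hc i hi), Finset.sum_const, nsmul_eq_mul]
    _ ≤ g c := mul_le_of_le_one_left hg (Nat.cast_le_one.2 hs)

section restrictSeq

open scoped Classical

variable {X : ℕ → Type*} [∀ n, NormedAddCommGroup (X n)] {I : Set ℕ}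

theorem restrictSeq_add (x y : ∀ n, X n) :
    restrictSeq I (x + y) = restrictSeq I x + restrictSeq I y := by
  funext n; by_cases hn : n ∈ I <;> simp [restrictSeq, hn]

theorem restrictSeq_restrictSeq (x : ∀ n, X n) :
    restrictSeq I (restrictSeq I x) = restrictSeq I x := by
  funext n; by_cases hn : n ∈ I <;> simp [restrictSeq, hn]

theorem sum_leaving_add_sq_norm_restrictSeq_max'_le (hI : I.OrdConnected) (x : ∀ n, X n)
    (S : Finset ℕ) (hS : S.Nonempty) (hT : (S.filter (· ∈ I)).Nonempty) :
    ∑ pq ∈ (consecPairs S).filter (fun pq => pq.1 ∈ I ∧ pq.2 ∉ I), ‖x pq.1‖ ^ 2 +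
      ‖restrictSeq I x (S.max' hS)‖ ^ 2 ≤ ‖x ((S.filter (· ∈ I)).max' hT)‖ ^ 2 := by
  set T := S.filter (· ∈ I)
  by_cases hM : S.max' hS ∈ I
  · have hleave : ∀ pq ∈ (consecPairs S).filter (fun pq => pq.1 ∈ I ∧ pq.2 ∉ I),
        ‖x pq.1‖ ^ 2 = 0 := fun ⟨p, q⟩ hpq => by
      rw [Finset.mem_filter, mem_consecPairs] at hpq
      exact absurd (hI.out hpq.2.1 hM ⟨hpq.1.2.2.1.le, S.le_max' q hpq.1.2.1⟩) hpq.2.2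
    have hMT : S.max' hS = T.max' hT := ((Finset.max'_eq_iff _ _ _).2
      ⟨Finset.mem_filter.2 ⟨S.max'_mem hS, hM⟩,
        fun r hr => S.le_max' r (Finset.mem_filter.1 hr).1⟩).symm
    rw [Finset.sum_eq_zero hleave, zero_add, restrictSeq, if_pos hM, hMT]
  · rw [restrictSeq, if_neg hM, norm_zero, zero_pow two_ne_zero, add_zero]
    refine sum_comp_le_of_injOn_of_eq (g := fun p => ‖x p‖ ^ 2)
      (consecPairs_injOn_fst.mono (Finset.coe_subset.2 (Finset.filter_subset _ _)))
      (fun ⟨_, _⟩ hpq => ?_) (sq_nonneg _)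
    rw [Finset.mem_filter] at hpq
    exact fst_eq_max'_of_mem_consecPairs hI hpq.1 hpq.2.1 hpq.2.2

variable [∀ n, NormedSpace ℝ (X n)] (φ : ∀ n, X n →L[ℝ] X (n + 1))

theorem restrictSeq_smul (c : ℝ) (x : ∀ n, X n) :
    restrictSeq I (c • x) = c • restrictSeq I x := by
  funext n; by_cases hn : n ∈ I <;> simp [restrictSeq, hn]

theorem sq_norm_phiTo_restrictSeq_sub_le (hφ : ∀ n, ‖φ n‖ ≤ 1) (x : ∀ n, X n) (p q : ℕ) :
    ‖phiTo φ p q (restrictSeq I x p) - restrictSeq I x q‖ ^ 2 ≤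
      (if p ∈ I ∧ q ∈ I then ‖phiTo φ p q (x p) - x q‖ ^ 2 else 0) +
      (if p ∉ I ∧ q ∈ I then ‖x q‖ ^ 2 else 0) +
      (if p ∈ I ∧ q ∉ I then ‖x p‖ ^ 2 else 0) := by
  by_cases hp : p ∈ I <;> by_cases hq : q ∈ I <;> simp [restrictSeq, hp, hq]
  exact pow_le_pow_left₀ (norm_nonneg _) (norm_phiTo_apply_le φ hφ p q (x p)) 2

theorem sigma2_restrictSeq_le (hφ : ∀ n, ‖φ n‖ ≤ 1) (hI : I.OrdConnected) (x : ∀ n, X n)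
    (S : Finset ℕ) :
    sigma2 φ (restrictSeq I x) S ≤ sigma2 φ x (S.filter (· ∈ I)) +
      ∑ pq ∈ (consecPairs S).filter (fun pq => pq.1 ∉ I ∧ pq.2 ∈ I), ‖x pq.2‖ ^ 2 +
      ∑ pq ∈ (consecPairs S).filter (fun pq => pq.1 ∈ I ∧ pq.2 ∉ I), ‖x pq.1‖ ^ 2 := by
  rw [sigma2_eq_sum_consecPairs, sigma2_eq_sum_consecPairs,
    ← filter_consecPairs_of_ordConnected hI, Finset.sum_filter, Finset.sum_filter,
    Finset.sum_filter, ← Finset.sum_add_distrib, ← Finset.sum_add_distrib]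
  exact Finset.sum_le_sum fun pq _ => sq_norm_phiTo_restrictSeq_sub_le φ hφ x pq.1 pq.2

theorem sum_entering_le_sigma2_insert_zero_sub (hI : I.OrdConnected) (x : ∀ n, X n)
    (hx0 : x 0 = 0) (S : Finset ℕ) (hT : (S.filter (· ∈ I)).Nonempty) :
    ∑ pq ∈ (consecPairs S).filter (fun pq => pq.1 ∉ I ∧ pq.2 ∈ I), ‖x pq.2‖ ^ 2 ≤
      sigma2 φ x (insert 0 (S.filter (· ∈ I))) - sigma2 φ x (S.filter (· ∈ I)) := by
  set T := S.filter (· ∈ I)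
  by_cases h0 : 0 ∈ T
  · rw [Finset.insert_eq_of_mem h0, sub_self]
    refine (Finset.sum_eq_zero fun ⟨p, q⟩ hpq => ?_).le
    rw [Finset.mem_filter, mem_consecPairs] at hpq
    exact absurd (hI.out (Finset.mem_filter.1 h0).2 hpq.2.2 ⟨p.zero_le, hpq.1.2.2.1.le⟩) hpq.2.1
  · have hpos : 0 < T.min' hT := Nat.pos_of_ne_zero fun h => h0 (h ▸ T.min'_mem hT)
    rw [sigma2_insert_of_lt_min' φ x hT hpos, hx0, map_zero, zero_sub, norm_neg,
      add_sub_cancel_left]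
    refine sum_comp_le_of_injOn_of_eq (g := fun q => ‖x q‖ ^ 2)
      (consecPairs_injOn_snd.mono (Finset.coe_subset.2 (Finset.filter_subset _ _)))
      (fun ⟨_, _⟩ hpq => ?_) (sq_nonneg _)
    rw [Finset.mem_filter] at hpq
    exact snd_eq_min'_of_mem_consecPairs hI hpq.1 hpq.2.1 hpq.2.2

end restrictSeq

section normJ

open scoped Classical

variable {X : ℕ → Type*} [∀ n, NormedAddCommGroup (X n)] [∀ n, NormedSpace ℝ (X n)]
  (φ : ∀ n, X n →L[ℝ] X (n + 1))

theorem rho2_eq_zero_of_forall_mem_eq_zero {x : ∀ n, X n} {S : Finset ℕ} (hS : S.Nonempty)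
    (hx : ∀ p ∈ S, x p = 0) : rho2 φ x S hS = 0 := by
  rw [rho2, sigma2_eq_sum_consecPairs, hx _ (S.max'_mem hS), norm_zero, zero_pow two_ne_zero,
    add_zero]
  refine Finset.sum_eq_zero fun ⟨p, q⟩ hpq => ?_
  rw [mem_consecPairs] at hpq
  simp [hx p hpq.1, hx q hpq.2.1]

theorem rho2_restrictSeq_le [Subsingleton (X 0)] (hφ : ∀ n, ‖φ n‖ ≤ 1) {I : Set ℕ}
    (hI : I.OrdConnected) (x : ∀ n, X n) (S : Finset ℕ) (hS : S.Nonempty)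
    (hT : (S.filter (· ∈ I)).Nonempty) :
    rho2 φ (restrictSeq I x) S hS ≤
      rho2 φ x (insert 0 (S.filter (· ∈ I))) (Finset.insert_nonempty _ _) := by
  have hmax : (insert 0 (S.filter (· ∈ I))).max' (Finset.insert_nonempty _ _) =
      (S.filter (· ∈ I)).max' hT := by
    rw [Finset.max'_insert _ _ hT]
    exact max_eq_right (Nat.zero_le _)
  have hsigma := sigma2_restrictSeq_le φ hφ hI x S
  have henter := sum_entering_le_sigma2_insert_zero_sub φ hI x (Subsingleton.elim _ _) S hT
  have hleave := sum_leaving_add_sq_norm_restrictSeq_max'_le hI x S hS hT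
  rw [rho2, rho2, hmax]
  linarith

theorem exists_rhoJ_restrictSeq_le [Subsingleton (X 0)] (hφ : ∀ n, ‖φ n‖ ≤ 1) {I : Set ℕ}
    (hI : I.OrdConnected) (x : ∀ n, X n) (S : Finset ℕ) (hS : S.Nonempty) :
    ∃ (S' : Finset ℕ) (hS' : S'.Nonempty), rhoJ φ (restrictSeq I x) S hS ≤ rhoJ φ x S' hS' := by
  by_cases hT : (S.filter (· ∈ I)).Nonempty
  · exact ⟨_, _, Real.sqrt_le_sqrt (rho2_restrictSeq_le φ hφ hI x S hS hT)⟩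
  · refine ⟨{0}, Finset.singleton_nonempty 0, ?_⟩
    have hzero : ∀ p ∈ S, restrictSeq I x p = 0 := fun p hp =>
      if_neg fun hpI => hT ⟨p, Finset.mem_filter.2 ⟨hp, hpI⟩⟩
    rw [rhoJ, rho2_eq_zero_of_forall_mem_eq_zero φ hS hzero, Real.sqrt_zero]
    exact Real.sqrt_nonneg _

variable {φ}

theorem upperBounds_rhoSet_subset {x y : ∀ n, X n}
    (h : ∀ S hS, ∃ (S' : Finset ℕ) (hS' : S'.Nonempty), rhoJ φ y S hS ≤ rhoJ φ x S' hS') :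
    upperBounds (rhoSet φ x) ⊆ upperBounds (rhoSet φ y) := by
  rintro b hb _ ⟨S, hS, rfl⟩
  obtain ⟨S', hS', hle⟩ := h S hS
  exact hle.trans (hb ⟨S', hS', rfl⟩)

theorem normJ_le_of_upperBounds_rhoSet_subset {x y : ∀ n, X n} (hx : memJhat φ x)
    (h : upperBounds (rhoSet φ x) ⊆ upperBounds (rhoSet φ y)) : normJ φ y ≤ normJ φ x :=
  mul_le_mul_of_nonneg_left
    (csSup_le ⟨_, {0}, Finset.singleton_nonempty 0, rfl⟩ (h fun _ hr => le_csSup hx hr))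
    (by positivity)

end normJ

theorem stmt7_general {X : ℕ → Type*} [∀ n, NormedAddCommGroup (X n)] [∀ n, NormedSpace ℝ (X n)]
    [Subsingleton (X 0)]
    (φ : ∀ n, X n →L[ℝ] X (n + 1)) (hφ : ∀ n, ‖φ n‖ ≤ 1)
    (I : Set ℕ) (hI : I.OrdConnected) :
    (∀ x y : ∀ n, X n, restrictSeq I (x + y) = restrictSeq I x + restrictSeq I y) ∧
    (∀ (c : ℝ) (x : ∀ n, X n), restrictSeq I (c • x) = c • restrictSeq I x) ∧
    (∀ x : ∀ n, X n, restrictSeq I (restrictSeq I x) = restrictSeq I x) ∧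
    (∀ x : ∀ n, X n, memJhat φ x →
      memJhat φ (restrictSeq I x) ∧ normJ φ (restrictSeq I x) ≤ normJ φ x) := by
  refine ⟨restrictSeq_add, restrictSeq_smul, restrictSeq_restrictSeq, fun x hx => ?_⟩
  have hbounds := upperBounds_rhoSet_subset (exists_rhoJ_restrictSeq_le φ hφ hI x)
  exact ⟨Set.Nonempty.mono hbounds hx, normJ_le_of_upperBounds_rhoSet_subset hx hbounds⟩

/-- for any interval `I ⊆ ℕ`, the coordinate restriction `P_I` is a
well-defined bounded linear projection on `Ĵ(Φ)` of norm at most `1`. -/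
theorem stmt7 {X : ℕ → Type*} [∀ n, NormedAddCommGroup (X n)] [∀ n, NormedSpace ℝ (X n)]
    [∀ n, CompleteSpace (X n)] [Subsingleton (X 0)]
    (φ : ∀ n, X n →L[ℝ] X (n + 1)) (hφ : ∀ n, ‖φ n‖ ≤ 1)
    (I : Set ℕ) (hI : I.OrdConnected) :
    (∀ x y : ∀ n, X n, restrictSeq I (x + y) = restrictSeq I x + restrictSeq I y) ∧
    (∀ (c : ℝ) (x : ∀ n, X n), restrictSeq I (c • x) = c • restrictSeq I x) ∧
    (∀ x : ∀ n, X n, restrictSeq I (restrictSeq I x) = restrictSeq I x) ∧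
    (∀ x : ∀ n, X n, memJhat φ x →
      memJhat φ (restrictSeq I x) ∧ normJ φ (restrictSeq I x) ≤ normJ φ x) :=
  stmt7_general φ hφ I hI
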